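/- arXiv:q-alg/9507033 — 2 statements merged into one kernel-verified Lean document; each statement's English description precedes it below -/
import Mathlib

section
/- For pairwise distinct vectors v_1,...,v_N ∈ ℝ^n, the function q ↦ det[q^{⟨v_j,v_k⟩}]_{1≤j,k≤N}, defined for q > 0, is not identically zero; in particular there exists q > 0 with det[q^{⟨v_j,v_k⟩}] ≠ 0. -/
/-!
Expanding the determinant over permutations writes it as the exponential sum
`∑ σ, sign σ * q ^ (∑ i, ⟪v (σ i), v i⟫)`. For `σ ≠ 1` the exponent is strictly smaller than
`∑ i, ‖v i‖ ^ 2`, the exponent of the identity, since the gap is half of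
`∑ i, ‖v (σ i) - v i‖ ^ 2 > 0`. So the identity term dominates as `q → ∞`.
-/

open Filter Topology

theorem sum_inner_perm_lt_sum_norm_sq {E ι : Type*} [NormedAddCommGroup E]
    [InnerProductSpace ℝ E] [Fintype ι] {v : ι → E} (hv : Function.Injective v)
    {σ : Equiv.Perm ι} (hσ : σ ≠ 1) :
    ∑ i, inner ℝ (v (σ i)) (v i) < ∑ i, ‖v i‖ ^ 2 := by
  have hgap : ∑ i, ‖v (σ i) - v i‖ ^ 2
      = 2 * (∑ i, ‖v i‖ ^ 2 - ∑ i, inner ℝ (v (σ i)) (v i)) := by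
    simp only [norm_sub_sq_real, Finset.sum_add_distrib, Finset.sum_sub_distrib,
      ← Finset.mul_sum, Equiv.sum_comp σ fun i => ‖v i‖ ^ 2]
    ring
  obtain ⟨i, hi⟩ : ∃ i, σ i ≠ i := not_forall.mp fun h => hσ (Equiv.ext h)
  have hpos : 0 < ∑ i, ‖v (σ i) - v i‖ ^ 2 :=
    Finset.sum_pos' (fun _ _ => by positivity)
      ⟨i, Finset.mem_univ i, pow_pos (norm_pos_iff.2 (sub_ne_zero.2 (hv.ne hi))) 2⟩
  linarith

theorem eventually_sum_mul_rpow_ne_zero {ι : Type*} [Fintype ι] [DecidableEq ι]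
    {c e : ι → ℝ} {i₀ : ι} (hc : c i₀ ≠ 0) (he : ∀ i ≠ i₀, e i < e i₀) :
    ∀ᶠ q in atTop, ∑ i, c i * q ^ e i ≠ 0 := by
  have hlim : Tendsto (fun q : ℝ => ∑ i, c i * q ^ (e i - e i₀)) atTop (𝓝 (c i₀)) := by
    rw [← Fintype.sum_ite_eq' i₀ c]
    refine tendsto_finsetSum _ fun i _ => ?_
    split_ifs with h
    · subst h
      simp only [sub_self, Real.rpow_zero, mul_one]
      exact tendsto_const_nhds
    · simpa [neg_sub] using
        (tendsto_rpow_neg_atTop (sub_pos.2 (he i h))).const_mul (c i)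
  filter_upwards [hlim.eventually_ne hc, eventually_gt_atTop 0] with q hq hq0
  have hfactor : ∑ i, c i * q ^ e i = q ^ e i₀ * ∑ i, c i * q ^ (e i - e i₀) := by
    rw [Finset.mul_sum]
    refine Finset.sum_congr rfl fun i _ => ?_
    rw [Real.rpow_sub hq0]
    field_simp
  rw [hfactor]
  exact mul_ne_zero (Real.rpow_pos_of_pos hq0 _).ne' hq

theorem Matrix.det_of_rpow {ι : Type*} [Fintype ι] [DecidableEq ι] {q : ℝ} (hq : 0 < q)
    (A : ι → ι → ℝ) :
    (Matrix.of fun j k => q ^ A j k).det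
      = ∑ σ : Equiv.Perm ι, (Equiv.Perm.sign σ : ℝ) * q ^ (∑ i, A (σ i) i) := by
  simp only [Matrix.det_apply, Matrix.of_apply, Units.smul_def, zsmul_eq_mul,
    Real.rpow_sum_of_pos hq]

theorem det_q_inner_not_identically_zero (n N : ℕ) (v : Fin N → EuclideanSpace ℝ (Fin n))
    (hv : Function.Injective v) :
    ∃ q : ℝ, 0 < q ∧
      Matrix.det (Matrix.of fun j k : Fin N => q ^ (inner ℝ (v j) (v k) : ℝ)) ≠ 0 := by
  have hdominant := eventually_sum_mul_rpow_ne_zero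
    (c := fun σ : Equiv.Perm (Fin N) => (Equiv.Perm.sign σ : ℝ))
    (e := fun σ => ∑ i, inner ℝ (v (σ i)) (v i)) (i₀ := 1) (by simp) fun σ hσ => by
      simpa [real_inner_self_eq_norm_sq] using sum_inner_perm_lt_sum_norm_sq hv hσ
  obtain ⟨q, hq, hq0⟩ := (hdominant.and (eventually_gt_atTop 0)).exists
  exact ⟨q, hq0, by rwa [Matrix.det_of_rpow hq0]⟩
end

section
/- Let E(y) = 2∑_{j=1}^n (cosh(c·y_j) - cosh(c·ρ_j)) with c > 0 and ρ_j = (n-j)g + d, g > 0, d ≥ 0. Then for λ, λ' ∈ Λ with λ' < λ in the dominance order (∑_{j≤m}λ'_j ≤ ∑_{j≤m}λ_j for all m, with λ' ≠ λ) one has E(ρ + λ') < E(ρ + λ). -/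
open Finset

private lemma cosh_strictConvexOn : StrictConvexOn ℝ Set.univ Real.cosh := by
  apply StrictMono.strictConvexOn_univ_of_deriv Real.continuous_cosh
  rw [Real.deriv_cosh]
  exact Real.sinh_strictMono

/-- generalized slope of `cosh`, with `sinh` (the derivative) on the diagonal. -/
noncomputable def cslope (u v : ℝ) : ℝ :=
  if u = v then Real.sinh u else (Real.cosh v - Real.cosh u) / (v - u)

private lemma slope_bounds {a b : ℝ} (hab : a < b) :
    Real.sinh a < (Real.cosh b - Real.cosh a) / (b - a) ∧
      (Real.cosh b - Real.cosh a) / (b - a) < Real.sinh b := by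
  obtain ⟨ξ, hξ, hval⟩ := exists_hasDerivAt_eq_slope Real.cosh Real.sinh hab
    Real.continuous_cosh.continuousOn (fun x _ => Real.hasDerivAt_cosh x)
  rw [← hval]
  exact ⟨Real.sinh_lt_sinh.2 hξ.1, Real.sinh_lt_sinh.2 hξ.2⟩

/-- slope of cosh, monotone in the right endpoint. -/
private lemma slope_lt_slope_right {a b b' : ℝ} (h1 : a < b) (h2 : b < b') :
    (Real.cosh b - Real.cosh a) / (b - a) < (Real.cosh b' - Real.cosh a) / (b' - a) :=
  cosh_strictConvexOn.secant_strict_mono (Set.mem_univ a) (Set.mem_univ b)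
    (Set.mem_univ b') h1.ne' (h1.trans h2).ne' h2

/-- slope of cosh, monotone in the left endpoint. -/
private lemma slope_lt_slope_left {a a' b : ℝ} (h1 : a < a') (h2 : a' < b) :
    (Real.cosh b - Real.cosh a) / (b - a) < (Real.cosh b - Real.cosh a') / (b - a') := by
  have key := cosh_strictConvexOn.secant_strict_mono (Set.mem_univ b) (Set.mem_univ a)
    (Set.mem_univ a') (h1.trans h2).ne h2.ne h1
  have e1 : (Real.cosh a - Real.cosh b) / (a - b)
      = (Real.cosh b - Real.cosh a) / (b - a) := by
    rw [← neg_div_neg_eq]; ring_nf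
  have e2 : (Real.cosh a' - Real.cosh b) / (a' - b)
      = (Real.cosh b - Real.cosh a') / (b - a') := by
    rw [← neg_div_neg_eq]; ring_nf
  rwa [e1, e2] at key

private lemma cslope_lt_cslope {u v u' v' : ℝ} (h1 : u' ≤ v') (h2 : u ≤ v)
    (h3 : u' < u) (h4 : v' < v) : cslope u' v' < cslope u v := by
  rcases h1.eq_or_lt with h1 | h1 <;> rcases h2.eq_or_lt with h2 | h2
  · -- both degenerate
    rw [cslope, if_pos h1, cslope, if_pos h2]
    exact Real.sinh_lt_sinh.2 h3
  · -- left degenerate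
    rw [cslope, if_pos h1, cslope, if_neg h2.ne]
    exact (Real.sinh_lt_sinh.2 h3).trans (slope_bounds h2).1
  · -- right degenerate
    rw [cslope, if_neg h1.ne, cslope, if_pos h2]
    exact (slope_bounds h1).2.trans (Real.sinh_lt_sinh.2 (h2 ▸ h4))
  · -- both nondegenerate
    rw [cslope, if_neg h1.ne, cslope, if_neg h2.ne]
    rcases le_or_gt v' u with hvu | hvu
    · calc (Real.cosh v' - Real.cosh u') / (v' - u')
          < Real.sinh v' := (slope_bounds h1).2
        _ ≤ Real.sinh u := Real.sinh_le_sinh.2 hvu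
        _ < (Real.cosh v - Real.cosh u) / (v - u) := (slope_bounds h2).1
    · calc (Real.cosh v' - Real.cosh u') / (v' - u')
          < (Real.cosh v' - Real.cosh u) / (v' - u) := slope_lt_slope_left h3 hvu
        _ < (Real.cosh v - Real.cosh u) / (v - u) := slope_lt_slope_right hvu h4

private lemma cslope_pos {u v : ℝ} (hu : 0 ≤ u) (huv : u < v) : 0 < cslope u v := by
  rw [cslope, if_neg huv.ne]
  apply div_pos _ (by linarith)
  have : Real.cosh u < Real.cosh v := by
    rw [Real.cosh_lt_cosh, abs_of_nonneg hu, abs_of_nonneg (hu.trans huv.le)]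
    exact huv
  linarith

private lemma cslope_nonneg {u v : ℝ} (hu : 0 ≤ u) (huv : u ≤ v) : 0 ≤ cslope u v := by
  rcases huv.eq_or_lt with h | h
  · rw [cslope, if_pos h]; exact Real.sinh_nonneg_iff.2 hu
  · exact (cslope_pos hu h).le

private lemma cslope_mul (p q : ℝ) :
    cslope (min p q) (max p q) * (q - p) = Real.cosh q - Real.cosh p := by
  rcases lt_trichotomy p q with h | h | h
  · rw [min_eq_left h.le, max_eq_right h.le, cslope, if_neg h.ne,
      div_mul_cancel₀ _ (sub_ne_zero.2 h.ne')]
  · simp [h]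
  · rw [min_eq_right h.le, max_eq_left h.le, cslope, if_neg h.ne,
      div_mul_eq_mul_div, div_eq_iff (sub_ne_zero.2 h.ne')]
    ring

private lemma abel_identity (s t : ℕ → ℝ) (n : ℕ) :
    ∑ j ∈ Finset.range n, s j * t j =
      (∑ m ∈ Finset.range n, (s m - s (m + 1)) * ∑ j ∈ Finset.range (m + 1), t j)
        + s n * ∑ j ∈ Finset.range n, t j := by
  induction n with
  | zero => simp
  | succ n ih =>
    rw [Finset.sum_range_succ (f := fun j => s j * t j), ih,
      Finset.sum_range_succ (f := fun m => (s m - s (m + 1)) * ∑ j ∈ Finset.range (m + 1), t j),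
      Finset.sum_range_succ t]
    ring

private lemma abel_pos (s t : ℕ → ℝ) (n : ℕ)
    (hsn : ∀ j, n ≤ j → s j = 0)
    (hs0 : ∀ j, 0 ≤ s j)
    (hanti : ∀ j, j + 1 < n → s (j + 1) < s j)
    (hQ : ∀ m, 0 ≤ ∑ j ∈ Finset.range m, t j)
    (ht : ∀ j, t j ≠ 0 → j < n ∧ 0 < s j)
    (hex : ∃ j, t j ≠ 0) :
    0 < ∑ j ∈ Finset.range n, s j * t j := by
  rw [abel_identity, hsn n le_rfl, zero_mul, add_zero]
  have hcoeff : ∀ m, m < n → 0 ≤ s m - s (m + 1) := by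
    intro m hm
    rcases lt_or_ge (m + 1) n with hm1 | hm1
    · exact (sub_pos.2 (hanti m hm1)).le
    · rw [hsn _ hm1, sub_zero]; exact hs0 m
  apply Finset.sum_pos'
  · intro m hm
    exact mul_nonneg (hcoeff m (Finset.mem_range.1 hm)) (hQ (m + 1))
  · -- find the least index where t is nonzero
    set m0 := Nat.find hex with hm0def
    have hm0 : t m0 ≠ 0 := Nat.find_spec hex
    have hmin : ∀ j, j < m0 → ¬ t j ≠ 0 := fun j hj => Nat.find_min hex hj
    have hm0n : m0 < n := (ht m0 hm0).1
    refine ⟨m0, Finset.mem_range.2 hm0n, ?_⟩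
    have hQval : ∑ j ∈ Finset.range (m0 + 1), t j = t m0 := by
      rw [Finset.sum_range_succ]
      have : ∑ j ∈ Finset.range m0, t j = 0 := by
        apply Finset.sum_eq_zero
        intro j hj
        by_contra hc
        exact (hmin j (Finset.mem_range.1 hj)) hc
      rw [this, zero_add]
    have htm0 : 0 < t m0 := by
      have := hQ (m0 + 1)
      rw [hQval] at this
      exact lt_of_le_of_ne this (Ne.symm hm0)
    have hco : 0 < s m0 - s (m0 + 1) := by
      rcases lt_or_ge (m0 + 1) n with hm1 | hm1
      · exact sub_pos.2 (hanti m0 hm1)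
      · rw [hsn _ hm1, sub_zero]; exact (ht m0 hm0).2
    rw [hQval]
    exact mul_pos hco htm0

private lemma sum_Iic_fin {n : ℕ} (f : Fin n → ℝ) (k : ℕ) (hk : k < n) :
    ∑ j ∈ Finset.Iic (⟨k, hk⟩ : Fin n), f j
      = ∑ j ∈ Finset.range (k + 1), (if hj : j < n then f ⟨j, hj⟩ else 0) := by
  refine Finset.sum_bij' (fun (j : Fin n) _ => (j : ℕ))
    (fun j hj => ⟨j, lt_of_le_of_lt (Nat.lt_succ_iff.1 (Finset.mem_range.1 hj)) hk⟩) ?_ ?_ ?_ ?_ ?_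
  · intro a ha
    simp only [Finset.mem_range, Nat.lt_succ_iff]
    exact Fin.le_def.1 (Finset.mem_Iic.1 ha)
  · intro a ha
    simp only [Finset.mem_Iic]
    exact Fin.mk_le_mk.2 (Nat.lt_succ_iff.1 (Finset.mem_range.1 ha))
  · intro a ha
    simp
  · intro a ha
    simp
  · intro a ha
    rw [dif_pos a.isLt]

theorem eigenvalue_dominance_monotone (n : ℕ) (c g d : ℝ) (hc : 0 < c) (hg : 0 < g)
    (hd : 0 ≤ d) (ρ : Fin n → ℝ)
    (hρ : ∀ j : Fin n, ρ j = (n - 1 - (j : ℕ) : ℝ) * g + d)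
    (l' l : Fin n → ℤ)
    (h' : ∀ i j : Fin n, i ≤ j → l' j ≤ l' i) (h'0 : ∀ j, 0 ≤ l' j)
    (h : ∀ i j : Fin n, i ≤ j → l j ≤ l i) (h0 : ∀ j, 0 ≤ l j)
    (hdom : ∀ m : Fin n, ∑ j ∈ Finset.Iic m, l' j ≤ ∑ j ∈ Finset.Iic m, l j)
    (hne : l' ≠ l) :
    2 * ∑ j : Fin n, (Real.cosh (c * (ρ j + (l' j : ℝ))) - Real.cosh (c * ρ j)) <
      2 * ∑ j : Fin n, (Real.cosh (c * (ρ j + (l j : ℝ))) - Real.cosh (c * ρ j)) := by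
  -- define the argument sequences
  set p : Fin n → ℝ := fun j => c * (ρ j + (l' j : ℝ)) with hp_def
  set q : Fin n → ℝ := fun j => c * (ρ j + (l j : ℝ)) with hq_def
  -- basic facts about ρ
  have hρ_nonneg : ∀ j : Fin n, 0 ≤ ρ j := by
    intro j
    rw [hρ j]
    have hj : (j : ℝ) ≤ (n : ℝ) - 1 := by
      have := j.isLt
      have : (j : ℕ) + 1 ≤ n := this
      have := Nat.cast_le (α := ℝ).2 this
      push_cast at this
      linarith
    nlinarith
  have hρ_strict : ∀ (j : ℕ) (hj1 : j + 1 < n), ρ ⟨j + 1, hj1⟩ + g = ρ ⟨j, Nat.lt_of_succ_lt hj1⟩ := by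
    intro j hj1
    rw [hρ, hρ]
    push_cast
    ring
  have hp_nonneg : ∀ j : Fin n, 0 ≤ p j := fun j =>
    mul_nonneg hc.le (add_nonneg (hρ_nonneg j) (by exact_mod_cast h'0 j))
  have hq_nonneg : ∀ j : Fin n, 0 ≤ q j := fun j =>
    mul_nonneg hc.le (add_nonneg (hρ_nonneg j) (by exact_mod_cast h0 j))
  have hp_strict : ∀ (j : ℕ) (hj1 : j + 1 < n),
      p ⟨j + 1, hj1⟩ < p ⟨j, Nat.lt_of_succ_lt hj1⟩ := by
    intro j hj1
    apply mul_lt_mul_of_pos_left _ hc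
    have h1 := hρ_strict j hj1
    have h2 : l' ⟨j + 1, hj1⟩ ≤ l' ⟨j, Nat.lt_of_succ_lt hj1⟩ :=
      h' _ _ (Fin.mk_le_mk.2 (Nat.le_succ j))
    have h2' : (l' ⟨j + 1, hj1⟩ : ℝ) ≤ (l' ⟨j, Nat.lt_of_succ_lt hj1⟩ : ℝ) := by
      exact_mod_cast h2
    linarith
  have hq_strict : ∀ (j : ℕ) (hj1 : j + 1 < n),
      q ⟨j + 1, hj1⟩ < q ⟨j, Nat.lt_of_succ_lt hj1⟩ := by
    intro j hj1
    apply mul_lt_mul_of_pos_left _ hc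
    have h1 := hρ_strict j hj1
    have h2 : l ⟨j + 1, hj1⟩ ≤ l ⟨j, Nat.lt_of_succ_lt hj1⟩ :=
      h _ _ (Fin.mk_le_mk.2 (Nat.le_succ j))
    have h2' : (l ⟨j + 1, hj1⟩ : ℝ) ≤ (l ⟨j, Nat.lt_of_succ_lt hj1⟩ : ℝ) := by
      exact_mod_cast h2
    linarith
  -- the ℕ-indexed sequences
  set t : ℕ → ℝ := fun j => if hj : j < n then q ⟨j, hj⟩ - p ⟨j, hj⟩ else 0 with ht_def
  set s : ℕ → ℝ := fun j => if hj : j < n then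
      cslope (min (p ⟨j, hj⟩) (q ⟨j, hj⟩)) (max (p ⟨j, hj⟩) (q ⟨j, hj⟩)) else 0 with hs_def
  have key : 0 < ∑ j ∈ Finset.range n, s j * t j := by
    apply abel_pos
    · intro j hj
      simp only [hs_def]
      exact dif_neg (not_lt.2 hj)
    · intro j
      simp only [hs_def]
      by_cases hj : j < n
      · rw [dif_pos hj]
        exact cslope_nonneg (le_min (hp_nonneg _) (hq_nonneg _)) (min_le_max)
      · rw [dif_neg hj]
    · intro j hj1
      simp only [hs_def]
      simp only [dif_pos hj1, dif_pos (Nat.lt_of_succ_lt hj1)]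
      apply cslope_lt_cslope min_le_max min_le_max
      · exact lt_min ((min_le_left _ _).trans_lt (hp_strict j hj1))
          ((min_le_right _ _).trans_lt (hq_strict j hj1))
      · exact max_lt ((hp_strict j hj1).trans_le (le_max_left _ _))
          ((hq_strict j hj1).trans_le (le_max_right _ _))
    · -- partial sums nonnegative
      have hQ' : ∀ m, m ≤ n → 0 ≤ ∑ j ∈ Finset.range m, t j := by
        intro m hmn
        rcases m with _ | k
        · simp
        have hk : k < n := hmn
        have conv := sum_Iic_fin (fun j => q j - p j) k hk
        simp only [ht_def]
        rw [← conv]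
        have : ∑ j ∈ Finset.Iic (⟨k, hk⟩ : Fin n), (q j - p j)
            = c * ((∑ j ∈ Finset.Iic (⟨k, hk⟩ : Fin n), (l j : ℝ))
              - ∑ j ∈ Finset.Iic (⟨k, hk⟩ : Fin n), (l' j : ℝ)) := by
          rw [← Finset.sum_sub_distrib, Finset.mul_sum]
          apply Finset.sum_congr rfl
          intro j _
          simp only [hq_def, hp_def]
          ring
        rw [this]
        apply mul_nonneg hc.le
        rw [sub_nonneg]
        have hd2 := hdom ⟨k, hk⟩
        have hd3 : ((∑ j ∈ Finset.Iic (⟨k, hk⟩ : Fin n), l' j : ℤ) : ℝ)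
            ≤ ((∑ j ∈ Finset.Iic (⟨k, hk⟩ : Fin n), l j : ℤ) : ℝ) := by exact_mod_cast hd2
        push_cast at hd3
        exact hd3
      intro m
      rcases le_or_gt m n with hmn | hmn
      · exact hQ' m hmn
      · have : ∑ j ∈ Finset.range m, t j = ∑ j ∈ Finset.range n, t j := by
          symm
          apply Finset.sum_subset
          · exact Finset.range_subset_range.2 hmn.le
          · intro x _ hx
            rw [Finset.mem_range, not_lt] at hx
            simp only [ht_def]
            exact dif_neg (not_lt.2 hx)
        rw [this]
        exact hQ' n le_rfl
    · -- nonzero entries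
      intro j hj
      by_cases hjn : j < n
      · refine ⟨hjn, ?_⟩
        simp only [ht_def, dif_pos hjn] at hj
        have hpq : p ⟨j, hjn⟩ ≠ q ⟨j, hjn⟩ := fun hc => hj (by rw [hc, sub_self])
        simp only [hs_def, dif_pos hjn]
        exact cslope_pos (le_min (hp_nonneg _) (hq_nonneg _)) (min_lt_max.2 hpq)
      · exfalso
        apply hj
        simp only [ht_def]
        exact dif_neg hjn
    · -- existence
      obtain ⟨j, hj⟩ := Function.ne_iff.1 hne
      refine ⟨(j : ℕ), ?_⟩
      simp only [ht_def, dif_pos j.isLt, Fin.eta]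
      intro hcon
      apply hj
      have : (l j : ℝ) = (l' j : ℝ) := by
        simp only [hq_def, hp_def] at hcon
        have hc' : c * ((l j : ℝ) - (l' j : ℝ)) = 0 := by linarith
        rcases mul_eq_zero.1 hc' with h1 | h1
        · exact absurd h1 hc.ne'
        · linarith
      exact_mod_cast this.symm
  -- convert the range sum to the Fin sum
  have conv2 : ∑ j ∈ Finset.range n, s j * t j
      = ∑ j : Fin n, (Real.cosh (q j) - Real.cosh (p j)) := by
    rw [← Fin.sum_univ_eq_sum_range (fun j => s j * t j) n]
    apply Finset.sum_congr rfl
    intro j _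
    simp only [hs_def, ht_def, dif_pos j.isLt, Fin.eta]
    exact cslope_mul (p j) (q j)
  rw [conv2] at key
  have expand : ∑ j : Fin n, (Real.cosh (q j) - Real.cosh (p j))
      = (∑ j : Fin n, (Real.cosh (c * (ρ j + (l j : ℝ))) - Real.cosh (c * ρ j)))
        - ∑ j : Fin n, (Real.cosh (c * (ρ j + (l' j : ℝ))) - Real.cosh (c * ρ j)) := by
    rw [← Finset.sum_sub_distrib]
    apply Finset.sum_congr rfl
    intro j _
    simp only [hq_def, hp_def]
    ring
  rw [expand] at key
  linarith
end
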